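/- Let (A,m) be an irreducible multiarrangement in K^ℓ with multiplicity function m: A → Z_{>0} not identically 1. Then every nonzero homogeneous derivation θ ∈ D(A,m) has polynomial degree at least 2. -/

import Mathlib

open scoped Classical
open MvPolynomial

namespace ArrPaper

variable {K : Type*} [Field K] {ℓ : ℕ}

/-- The coordinate ring `S = K[x₁,…,x_ℓ]`. -/
noncomputable abbrev S (K : Type*) [Field K] (ℓ : ℕ) := MvPolynomial (Fin ℓ) K

/-- The linear form associated to a covector `c`. -/
noncomputable def linForm (c : Fin ℓ → K) : S K ℓ :=
  ∑ i, MvPolynomial.C (c i) * MvPolynomial.X i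

/-- The linear functional associated to a covector. -/
noncomputable def toFunc (c : Fin ℓ → K) : (Fin ℓ → K) →ₗ[K] K :=
  ∑ i, c i • LinearMap.proj i

/-- A (central) hyperplane arrangement, given by a finite set of nonzero,
pairwise non-proportional covectors (defining linear forms). -/
structure Arrangement (K : Type*) [Field K] (ℓ : ℕ) where
  hyps : Finset (Fin ℓ → K)
  ne_zero : ∀ c ∈ hyps, c ≠ 0
  nonparallel : ∀ c ∈ hyps, ∀ c' ∈ hyps, c ≠ c' → ∀ t : K, c' ≠ t • c

/-- Derivations of the polynomial ring `S`. -/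
abbrev Der (K : Type*) [Field K] (ℓ : ℕ) := Derivation K (S K ℓ) (S K ℓ)

/-- `θ` is a logarithmic derivation of the multiarrangement `(A, m)`, i.e.
`θ(α_H) ∈ α_H^{m(H)}·S` for all `H ∈ A`. -/
def IsLogDer (A : Arrangement K ℓ) (m : (Fin ℓ → K) → ℕ) (θ : Der K ℓ) : Prop :=
  ∀ c ∈ A.hyps, (linForm c) ^ (m c) ∣ θ (linForm c)

/-- `θ` is homogeneous of polynomial degree `d`: `θ(α)` is homogeneous of degree `d`
for every linear form `α`. -/
def IsHomogOfDeg (θ : Der K ℓ) (d : ℕ) : Prop :=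
  ∀ c : Fin ℓ → K, (θ (linForm c)).IsHomogeneous d

/-- `θ₁, …, θ_ℓ` form a basis of the `S`-module `D(A,m)`. -/
def IsDerBasis (A : Arrangement K ℓ) (m : (Fin ℓ → K) → ℕ) (θ : Fin ℓ → Der K ℓ) : Prop :=
  (∀ i, IsLogDer A m (θ i)) ∧
  ∀ η : Der K ℓ, IsLogDer A m η → ∃! f : Fin ℓ → S K ℓ, η = ∑ i, f i • θ i

/-- `(A,m)` is free with a homogeneous basis of degrees (exponents) `d`. -/
def IsFreeWithExp (A : Arrangement K ℓ) (m : (Fin ℓ → K) → ℕ) (d : Fin ℓ → ℕ) : Prop :=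
  ∃ θ : Fin ℓ → Der K ℓ, (∀ i, IsHomogOfDeg (θ i) (d i)) ∧ IsDerBasis A m θ

/-- `(A,m)` is a free multiarrangement. -/
def IsFree (A : Arrangement K ℓ) (m : (Fin ℓ → K) → ℕ) : Prop :=
  ∃ d : Fin ℓ → ℕ, IsFreeWithExp A m d

/-- `|m|`, the total multiplicity. -/
def msum (A : Arrangement K ℓ) (m : (Fin ℓ → K) → ℕ) : ℕ := ∑ c ∈ A.hyps, m c

/-- The rank of an arrangement: the dimension of the span of its covectors. -/
noncomputable def rank (A : Arrangement K ℓ) : ℕ :=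
  Module.finrank K (Submodule.span K (A.hyps : Set (Fin ℓ → K)))

/-- `A` is reducible: after a linear change of coordinates it is a product of two
arrangements in complementary (nonzero) subspaces.  In terms of covectors: the
covectors split between two complementary nonzero subspaces of the dual space. -/
def Reducible (A : Arrangement K ℓ) : Prop :=
  ∃ W₁ W₂ : Submodule K (Fin ℓ → K), W₁ ≠ ⊥ ∧ W₂ ≠ ⊥ ∧ W₁ ⊓ W₂ = ⊥ ∧ W₁ ⊔ W₂ = ⊤ ∧
    ∀ c ∈ A.hyps, c ∈ W₁ ∨ c ∈ W₂

/-- The hyperplanes of the localization at a flat; the flat of codimension `r` is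
encoded by the `r`-dimensional subspace `U` of the dual space spanned by the
covectors of the hyperplanes containing it. -/
noncomputable def locHyps (A : Arrangement K ℓ) (U : Submodule K (Fin ℓ → K)) :
    Finset (Fin ℓ → K) :=
  A.hyps.filter (· ∈ U)

/-- `U` encodes a flat of `A` of codimension `r` (an element of `L_r(A)`). -/
def IsFlatOfRank (A : Arrangement K ℓ) (U : Submodule K (Fin ℓ → K)) (r : ℕ) : Prop :=
  Module.finrank K U = r ∧ Submodule.span K (locHyps A U : Set (Fin ℓ → K)) = U

/-- The localization `A_X` of `A` at the flat encoded by `U`. -/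
noncomputable def localize (A : Arrangement K ℓ) (U : Submodule K (Fin ℓ → K)) :
    Arrangement K ℓ where
  hyps := locHyps A U
  ne_zero := fun c hc => A.ne_zero c (Finset.mem_filter.mp hc).1
  nonparallel := fun c hc c' hc' =>
    A.nonparallel c (Finset.mem_filter.mp hc).1 c' (Finset.mem_filter.mp hc').1

/-- `H₀` (given by covector `c₀`) is a heavy hyperplane of `(A,m)`. -/
def IsHeavy (A : Arrangement K ℓ) (m : (Fin ℓ → K) → ℕ) (c₀ : Fin ℓ → K) : Prop :=
  c₀ ∈ A.hyps ∧ (∑ c ∈ A.hyps.erase c₀, m c) ≤ m c₀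

/-- `H₀` (given by covector `c₀`) is a locally heavy hyperplane of `(A,m)`. -/
def IsLocallyHeavy (A : Arrangement K ℓ) (m : (Fin ℓ → K) → ℕ) (c₀ : Fin ℓ → K) : Prop :=
  c₀ ∈ A.hyps ∧ ∀ U : Submodule K (Fin ℓ → K), IsFlatOfRank A U 2 → c₀ ∈ U →
    3 ≤ (locHyps A U).card → (∑ c ∈ (locHyps A U).erase c₀, m c) ≤ m c₀

/-- `b` is the second Betti number of the rank-2 localization of `(A,m)` at `U`:
the product of the nonzero exponents of this free rank-2 multiarrangement. -/
def IsLocalB2 (A : Arrangement K ℓ) (m : (Fin ℓ → K) → ℕ)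
    (U : Submodule K (Fin ℓ → K)) (b : ℕ) : Prop :=
  ∃ d : Fin ℓ → ℕ, IsFreeWithExp (localize A U) m d ∧
    b = ∏ i ∈ Finset.univ.filter (fun i => d i ≠ 0), d i

/-- `b` is the second Betti number `b₂(A,m)` of the multiarrangement `(A,m)`. -/
def IsB2 (A : Arrangement K ℓ) (m : (Fin ℓ → K) → ℕ) (b : ℕ) : Prop :=
  ∃ bloc : Submodule K (Fin ℓ → K) → ℕ,
    (∀ U, IsFlatOfRank A U 2 → IsLocalB2 A m U (bloc U)) ∧
    b = ∑ᶠ U ∈ {U : Submodule K (Fin ℓ → K) | IsFlatOfRank A U 2}, bloc U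

/-- The second Betti number of a simple arrangement:
`b₂(A) = Σ_{X ∈ L₂(A)} (|A_X| - 1)`. -/
noncomputable def b2Simple (A : Arrangement K ℓ) : ℕ :=
  ∑ᶠ U ∈ {U : Submodule K (Fin ℓ → K) | IsFlatOfRank A U 2}, ((locHyps A U).card - 1)

/-- The Euler–Ziegler multiplicity of the restricted hyperplane `H₀ ∩ ker(c)` of
`A^{H₀}`: `m^{H₀}(X) = |m_X| - m(H₀)`. -/
noncomputable def EZmult (A : Arrangement K ℓ) (m : (Fin ℓ → K) → ℕ)
    (c₀ c : Fin ℓ → K) : ℕ :=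
  (∑ c' ∈ A.hyps.filter (· ∈ Submodule.span K ({c₀, c} : Set (Fin ℓ → K))), m c') - m c₀

/-- Two covectors are parallel (define the same hyperplane). -/
def Parallel {n : ℕ} (b b' : Fin n → K) : Prop := ∃ t : K, t ≠ 0 ∧ b' = t • b

/-- The covector on `K^n` obtained by restricting the covector `c` on `K^{n+1}` to the
hyperplane `ker c₀`, transported by the linear isomorphism `e : ker c₀ ≃ K^n`. -/
noncomputable def resCov {n : ℕ} (c₀ : Fin (n+1) → K)
    (e : ↥(LinearMap.ker (toFunc c₀)) ≃ₗ[K] (Fin n → K)) (c : Fin (n+1) → K) :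
    Fin n → K :=
  fun j => toFunc c ((e.symm (Pi.single j 1) : ↥(LinearMap.ker (toFunc c₀))) : Fin (n+1) → K)

/-- `(B, mB)` is (a model, in coordinates, of) the Euler–Ziegler restriction
`(A^{H₀}, m^{H₀})` of `(A,m)` to the hyperplane `H₀ = ker c₀ ∈ A`. -/
def IsEZRes {n : ℕ} (A : Arrangement K (n+1)) (m : (Fin (n+1) → K) → ℕ)
    (c₀ : Fin (n+1) → K) (B : Arrangement K n) (mB : (Fin n → K) → ℕ) : Prop :=
  c₀ ∈ A.hyps ∧
  ∃ e : ↥(LinearMap.ker (toFunc c₀)) ≃ₗ[K] (Fin n → K),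
    (∀ c ∈ A.hyps.erase c₀, ∃ b ∈ B.hyps,
        Parallel b (resCov c₀ e c) ∧ mB b = EZmult A m c₀ c) ∧
    (∀ b ∈ B.hyps, ∃ c ∈ A.hyps.erase c₀, Parallel b (resCov c₀ e c))

/-- A combinatorial equivalence between two arrangements: a bijection between the
hyperplanes inducing an isomorphism of intersection lattices (it preserves the rank
of every subset of hyperplanes). -/
def CombEquiv (A A' : Arrangement K ℓ) : Prop :=
  ∃ φ : (Fin ℓ → K) → (Fin ℓ → K), Set.BijOn φ ↑A.hyps ↑A'.hyps ∧
    ∀ T : Finset (Fin ℓ → K), T ⊆ A.hyps →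
      Module.finrank K (Submodule.span K (T : Set (Fin ℓ → K))) =
      Module.finrank K (Submodule.span K ((T.image φ) : Set (Fin ℓ → K)))


/-! A derivation of degree `0` sends each `α_H` to a constant, which `α_H ^ m(H)` divides only
if it is `0`; in degree `1` the same holds whenever `m(H) ≥ 2`. A derivation of degree `1` acts
on linear forms through an endomorphism `φ` of the dual space, and `α_H ∣ θ(α_H)` makes every
defining covector an eigenvector of `φ`. The Fitting decomposition `ker φⁿ ⊕ range φⁿ` separates
the covectors of eigenvalue `0`, among them that of a hyperplane with `m(H) ≥ 2`, from the others,
so irreducibility forces all eigenvalues to vanish. Either way `θ` kills every `α_H`, and the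
covectors of an irreducible arrangement span the dual space, so `θ = 0`. -/

theorem _root_.Finsupp.exists_eq_single_of_degree_eq_one {σ : Type*} {s : σ →₀ ℕ}
    (hs : s.degree = 1) : ∃ i, s = Finsupp.single i 1 := by
  have hcard : Multiset.card (Finsupp.toMultiset s) = 1 := by
    rw [Finsupp.card_toMultiset, ← hs, Finsupp.degree_apply, Finsupp.sum]
    rfl
  obtain ⟨i, hi⟩ := Multiset.card_eq_one.mp hcard
  exact ⟨i, by rw [Finsupp.toMultiset_eq_iff.mp hi, Multiset.toFinsupp_singleton]⟩

theorem _root_.MvPolynomial.IsHomogeneous.eq_zero_of_dvd_of_lt {σ R : Type*} [CommSemiring R]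
    [NoZeroDivisors R] {g p : MvPolynomial σ R} {k d : ℕ} (hg : g.IsHomogeneous k)
    (hp : p.IsHomogeneous d) (hdvd : g ∣ p) (hdk : d < k) : p = 0 := by
  by_contra hp0
  have hg0 : g ≠ 0 := by rintro rfl; exact hp0 (zero_dvd_iff.mp hdvd)
  have := totalDegree_le_of_dvd_of_isDomain hdvd hp0
  rw [hg.totalDegree hg0, hp.totalDegree hp0] at this
  omega

noncomputable def linFormₗ : (Fin ℓ → K) →ₗ[K] S K ℓ :=
  Fintype.linearCombination K X

@[simp] lemma linFormₗ_apply (c : Fin ℓ → K) : linFormₗ c = linForm c := by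
  simp [linFormₗ, linForm, Fintype.linearCombination_apply, smul_eq_C_mul]

@[simp] lemma linForm_zero : linForm (0 : Fin ℓ → K) = 0 := by
  rw [← linFormₗ_apply, map_zero]

lemma linForm_smul (t : K) (c : Fin ℓ → K) : linForm (t • c) = C t * linForm c := by
  rw [← linFormₗ_apply, map_smul, linFormₗ_apply, smul_eq_C_mul]

@[simp] lemma linForm_single (j : Fin ℓ) : linForm (Pi.single j 1 : Fin ℓ → K) = X j := by
  simp [← linFormₗ_apply, linFormₗ, Fintype.linearCombination_apply, Pi.single_apply]

@[simp] lemma coeff_single_linForm (c : Fin ℓ → K) (j : Fin ℓ) :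
    coeff (Finsupp.single j 1) (linForm c) = c j := by
  simp [linForm, coeff_sum, coeff_C_mul, coeff_X, Finsupp.single_eq_single_iff]

lemma linForm_injective : Function.Injective (linForm : (Fin ℓ → K) → S K ℓ) :=
  fun a b h => funext fun j => by rw [← coeff_single_linForm a j, h, coeff_single_linForm]

lemma linForm_eq_zero_iff {c : Fin ℓ → K} : linForm c = 0 ↔ c = 0 :=
  linForm_injective.eq_iff' linForm_zero

lemma isHomogeneous_linForm (c : Fin ℓ → K) : (linForm c).IsHomogeneous 1 :=
  IsHomogeneous.sum _ _ _ fun i _ => isHomogeneous_C_mul_X _ i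

lemma eq_linForm_of_isHomogeneous_one {p : S K ℓ} (hp : p.IsHomogeneous 1) :
    p = linForm fun j => coeff (Finsupp.single j 1) p := by
  ext s
  by_cases hs : s.degree = 1
  · obtain ⟨i, rfl⟩ := Finsupp.exists_eq_single_of_degree_eq_one hs
    rw [coeff_single_linForm]
  · rw [hp.coeff_eq_zero hs, (isHomogeneous_linForm _).coeff_eq_zero hs]

lemma exists_eq_smul_of_linForm_dvd {c v : Fin ℓ → K} (h : linForm c ∣ linForm v) :
    ∃ t : K, v = t • c := by
  obtain ⟨q, hq⟩ := h
  by_cases hv : v = 0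
  · exact ⟨0, by rw [hv, zero_smul]⟩
  have hv0 : linForm v ≠ 0 := linForm_eq_zero_iff.not.mpr hv
  obtain ⟨hc0, hq0⟩ := mul_ne_zero_iff.mp (hq ▸ hv0)
  have hdeg := (isHomogeneous_linForm v).totalDegree hv0
  rw [hq, totalDegree_mul_of_isDomain hc0 hq0, (isHomogeneous_linForm c).totalDegree hc0] at hdeg
  rw [totalDegree_eq_zero_iff_eq_C.mp (by omega : q.totalDegree = 0)] at hq
  exact ⟨_, linForm_injective (by rw [hq, linForm_smul, mul_comm])⟩

lemma derivation_eq_zero_of_span_eq_top {θ : Der K ℓ} {s : Set (Fin ℓ → K)}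
    (hs : Submodule.span K s = ⊤) (h : ∀ c ∈ s, θ (linForm c) = 0) : θ = 0 := by
  have hθ : θ.toLinearMap ∘ₗ linFormₗ = 0 :=
    LinearMap.ext_on hs fun c hc => by simpa using h c hc
  refine derivation_ext fun j => ?_
  simpa using LinearMap.congr_fun hθ (Pi.single j 1)

noncomputable def linearPart (θ : Der K ℓ) : Module.End K (Fin ℓ → K) :=
  (LinearMap.pi fun j => lcoeff K (Finsupp.single j 1)) ∘ₗ θ.toLinearMap ∘ₗ linFormₗ

lemma linForm_linearPart {θ : Der K ℓ} (hθ : IsHomogOfDeg θ 1) (c : Fin ℓ → K) :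
    linForm (linearPart θ c) = θ (linForm c) := by
  conv_rhs => rw [eq_linForm_of_isHomogeneous_one (hθ c)]
  congr 1
  ext j
  simp [linearPart]

lemma span_hyps_eq_top_of_not_reducible {A : Arrangement K ℓ} (hA : ¬ Reducible A)
    (hne : A.hyps.Nonempty) : Submodule.span K (A.hyps : Set (Fin ℓ → K)) = ⊤ := by
  by_contra hspan
  obtain ⟨W, hW⟩ := Submodule.exists_isCompl (Submodule.span K (A.hyps : Set (Fin ℓ → K)))
  obtain ⟨c, hc⟩ := hne
  refine hA ⟨_, W, ?_, ?_, hW.inf_eq_bot, hW.sup_eq_top,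
    fun c hc => Or.inl (Submodule.subset_span hc)⟩
  · exact (Submodule.ne_bot_iff _).mpr ⟨c, Submodule.subset_span hc, A.ne_zero c hc⟩
  · rintro rfl
    exact hspan (by simpa using hW.sup_eq_top)

lemma _root_.Module.End.pow_apply_of_apply_eq_smul {R V : Type*} [CommSemiring R]
    [AddCommMonoid V] [Module R V] {φ : Module.End R V} {v : V} {t : R} (h : φ v = t • v)
    (n : ℕ) : (φ ^ n) v = t ^ n • v := by
  induction n with
  | zero => simp
  | succ n ih => rw [pow_succ, Module.End.mul_apply, h, map_smul, ih, smul_smul, pow_succ']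

lemma reducible_of_forall_apply_eq_smul {A : Arrangement K ℓ} (φ : Module.End K (Fin ℓ → K))
    (hφ : ∀ c ∈ A.hyps, ∃ t : K, φ c = t • c) (h₀ : ∃ c ∈ A.hyps, φ c = 0)
    (h₁ : ∃ c ∈ A.hyps, φ c ≠ 0) : Reducible A := by
  obtain ⟨n, hcompl, hn⟩ :=
    (φ.eventually_isCompl_ker_pow_range_pow.and (Filter.eventually_ge_atTop 1)).exists
  have hker : ∀ c, φ c = 0 → c ∈ LinearMap.ker (φ ^ n) := fun c h => by
    rw [LinearMap.mem_ker, ← Nat.sub_add_cancel hn, pow_succ, Module.End.mul_apply, h, map_zero]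
  have hrange : ∀ c ∈ A.hyps, φ c ≠ 0 → c ∈ LinearMap.range (φ ^ n) := fun c hc h => by
    obtain ⟨t, ht⟩ := hφ c hc
    have htn : t ^ n ≠ 0 := pow_ne_zero n (by rintro rfl; exact h (by rw [ht, zero_smul]))
    refine ⟨(t ^ n)⁻¹ • c, ?_⟩
    rw [map_smul, Module.End.pow_apply_of_apply_eq_smul ht, smul_smul, inv_mul_cancel₀ htn,
      one_smul]
  obtain ⟨c₀, hc₀, hφc₀⟩ := h₀
  obtain ⟨c₁, hc₁, hφc₁⟩ := h₁
  refine ⟨_, _, ?_, ?_, hcompl.inf_eq_bot, hcompl.sup_eq_top, fun c hc => ?_⟩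
  · exact (Submodule.ne_bot_iff _).mpr ⟨c₀, hker c₀ hφc₀, A.ne_zero c₀ hc₀⟩
  · exact (Submodule.ne_bot_iff _).mpr ⟨c₁, hrange c₁ hc₁ hφc₁, A.ne_zero c₁ hc₁⟩
  · by_cases h : φ c = 0
    exacts [Or.inl (hker c h), Or.inr (hrange c hc h)]

namespace IsLogDer

variable {A : Arrangement K ℓ} {m : (Fin ℓ → K) → ℕ} {θ : Der K ℓ} {c : Fin ℓ → K}

lemma map_linForm_eq_zero (hθ : IsLogDer A m θ) {d : ℕ} (hhom : IsHomogOfDeg θ d)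
    (hc : c ∈ A.hyps) (hd : d < m c) : θ (linForm c) = 0 :=
  (by simpa using (isHomogeneous_linForm c).pow (m c) : ((linForm c) ^ m c).IsHomogeneous (m c))
    |>.eq_zero_of_dvd_of_lt (hhom c) (hθ c hc) hd

lemma exists_linearPart_eq_smul (hθ : IsLogDer A m θ) (hhom : IsHomogOfDeg θ 1)
    (hc : c ∈ A.hyps) (hm : 0 < m c) : ∃ t : K, linearPart θ c = t • c :=
  exists_eq_smul_of_linForm_dvd <| by
    rw [linForm_linearPart hhom]
    exact (dvd_pow_self _ hm.ne').trans (hθ c hc)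

end IsLogDer

theorem stmt1 (A : Arrangement K ℓ) (m : (Fin ℓ → K) → ℕ)
    (hm : ∀ c ∈ A.hyps, 0 < m c) (hm1 : ∃ c ∈ A.hyps, m c ≠ 1)
    (hA : ¬ Reducible A) (θ : Der K ℓ) (d : ℕ)
    (hθ : IsLogDer A m θ) (hhom : IsHomogOfDeg θ d) (hne : θ ≠ 0) : 2 ≤ d := by
  by_contra! hd
  obtain ⟨c₀, hc₀, hmc₀⟩ := hm1
  have hspan := span_hyps_eq_top_of_not_reducible hA ⟨c₀, hc₀⟩
  have hkill : ∀ c ∈ A.hyps, d < m c → θ (linForm c) = 0 := fun c hc =>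
    hθ.map_linForm_eq_zero hhom hc
  interval_cases d
  · exact hne (derivation_eq_zero_of_span_eq_top hspan fun c hc => hkill c hc (hm c hc))
  · have hφc₀ : linearPart θ c₀ = 0 := linForm_injective <| by
      rw [linForm_linearPart hhom, hkill c₀ hc₀ (by have := hm c₀ hc₀; omega), linForm_zero]
    refine hne (derivation_eq_zero_of_span_eq_top hspan fun c hc => ?_)
    by_contra hc'
    refine hA (reducible_of_forall_apply_eq_smul (linearPart θ)
      (fun c hc => hθ.exists_linearPart_eq_smul hhom hc (hm c hc)) ⟨c₀, hc₀, hφc₀⟩ ⟨c, hc, ?_⟩)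
    rwa [← linForm_injective.ne_iff, linForm_linearPart hhom, linForm_zero]

end ArrPaper
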